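/- Let d_T denote the arc-length distance on the circle S¹ (equivalently, d_T(u,v) = min over k ∈ ℤ of |u − v + 2πk| for angles u, v). For a finite multiset of circle-valued data points y_1,…,y_m with nonnegative weights, the weighted median functional μ ↦ Σ_i w_i d_T(μ, y_i) attains its minimum over S¹ at some point in the set {y_1,…,y_m} ∪ {ỹ_1,…,ỹ_m}, where ỹ_i denotes the antipodal point of y_i. -/

import Mathlib

/-!
Every data point `y i` and its antipode cut the circle into two closed half-circles, on each of
which `μ ↦ d_T(μ, y i)` is affine in the arc-length parameter. A point `μ` that is neither a data
point nor an antipode therefore lies on an arc, bounded by such points, on which the whole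
functional is affine; an affine function on an interval is minimised at an endpoint.
-/

open Finset

/-- Arc-length (geodesic) distance on the circle `S¹ = ℝ/2πℤ`, via the representative
of the difference in `(-π, π]`. -/
noncomputable def arcDist (a b : Real.Angle) : ℝ := |(a - b).toReal|

open Real Real.Angle

theorem arcDist_add_coe {y : Angle} {x : ℝ} (hx : x ∈ Set.Icc 0 π) :
    arcDist (y + x) y = x := by
  rw [arcDist, add_sub_cancel_left, abs_toReal_coe_eq_self_iff.2 hx]

theorem arcDist_add_pi_add_coe {y : Angle} {x : ℝ} (hx : x ∈ Set.Icc 0 π) :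
    arcDist (y + π + x) y = π - x := by
  have hsub : y + π + x - y = -((π - x : ℝ) : Angle) := by
    rw [coe_sub, neg_sub, sub_eq_add_neg _ (π : Angle), neg_coe_pi]; abel
  rw [arcDist, hsub, abs_toReal_neg_coe_eq_self_iff.2 ⟨by linarith [hx.2], by linarith [hx.1]⟩]

theorem exists_arcDist_add_coe_affine {y b : Angle} (hb : b ∈ ({y, y + π} : Set Angle)) :
    ∃ κ σ : ℝ, ∀ x ∈ Set.Icc 0 π, arcDist (b + x) y = κ + σ * x := by
  rcases hb with rfl | rfl
  · exact ⟨0, 1, fun x hx => by rw [arcDist_add_coe hx]; ring⟩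
  · exact ⟨π, -1, fun x hx => by rw [arcDist_add_pi_add_coe hx]; ring⟩

theorem Real.Angle.exists_eq_add_coe_of_mem_Ico (μ y : Angle) :
    ∃ b ∈ ({y, y + π} : Set Angle), ∃ r ∈ Set.Ico 0 π, μ = b + r := by
  set a := (μ - y).toReal
  have hμ : μ = y + a := by rw [coe_toReal]; abel
  rcases lt_or_ge a 0 with ha | ha
  · refine ⟨y + π, Or.inr rfl, a + π, ⟨by linarith [neg_pi_lt_toReal (μ - y)], by linarith⟩, ?_⟩
    rw [hμ, coe_add, add_comm (a : Angle), ← add_assoc, add_assoc y, coe_pi_add_coe_pi, add_zero]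
  rcases (toReal_le_pi (μ - y)).lt_or_eq with ha' | ha'
  · exact ⟨y, Or.inl rfl, a, ⟨ha, ha'⟩, hμ⟩
  · refine ⟨y + π, Or.inr rfl, 0, ⟨le_rfl, pi_pos⟩, ?_⟩
    rw [hμ, show a = π from ha', coe_zero, add_zero]

noncomputable def arcCost {ι : Type*} [Fintype ι] (y : ι → Angle) (w : ι → ℝ) (μ : Angle) : ℝ :=
  ∑ i, w i * arcDist μ (y i)

section

variable {ι : Type*} (y : ι → Angle)

def dataAndAntipodes : Set Angle :=
  Set.range y ∪ Set.range (fun i => y i + (π : Angle))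

variable {y}

theorem mem_dataAndAntipodes {i : ι} {b : Angle} (hb : b ∈ ({y i, y i + π} : Set Angle)) :
    b ∈ dataAndAntipodes y ∧ b + π ∈ dataAndAntipodes y := by
  rcases hb with rfl | rfl
  · exact ⟨Or.inl ⟨i, rfl⟩, Or.inr ⟨i, rfl⟩⟩
  · refine ⟨Or.inr ⟨i, rfl⟩, Or.inl ⟨i, ?_⟩⟩
    rw [add_assoc, coe_pi_add_coe_pi, add_zero]

variable [Fintype ι] (w : ι → ℝ)

theorem exists_arcCost_add_coe_affine {μ : Angle} {b : ι → Angle} {r : ι → ℝ}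
    (hb : ∀ i, b i ∈ ({y i, y i + π} : Set Angle)) (hμ : ∀ i, μ = b i + r i) {p q : ℝ}
    (hp : ∀ i, 0 ≤ r i + p) (hq : ∀ i, r i + q ≤ π) :
    ∃ A B : ℝ, ∀ s ∈ Set.Icc p q, arcCost y w (μ + s) = A + B * s := by
  choose κ σ hκσ using fun i => exists_arcDist_add_coe_affine (hb i)
  refine ⟨∑ i, w i * (κ i + σ i * r i), ∑ i, w i * σ i, fun s hs => ?_⟩
  rw [arcCost, sum_mul, ← sum_add_distrib]
  refine sum_congr rfl fun i _ => ?_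
  have hi : r i + s ∈ Set.Icc 0 π := ⟨by linarith [hp i, hs.1], by linarith [hq i, hs.2]⟩
  rw [hμ i, add_assoc, ← coe_add, hκσ i _ hi]
  ring

theorem exists_mem_dataAndAntipodes_arcCost_le [Nonempty ι] (μ : Angle) :
    ∃ c ∈ dataAndAntipodes y, arcCost y w c ≤ arcCost y w μ := by
  choose b hb r hr hμ using fun i => exists_eq_add_coe_of_mem_Ico μ (y i)
  by_cases hr0 : ∃ i, r i = 0
  · obtain ⟨i, hi⟩ := hr0
    refine ⟨μ, ?_, le_rfl⟩
    rw [hμ i, hi, coe_zero, add_zero]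
    exact (mem_dataAndAntipodes (hb i)).1
  push Not at hr0
  obtain ⟨j, hj⟩ := Finite.exists_min r
  obtain ⟨k, hk⟩ := Finite.exists_max r
  have hpos : 0 < r j := lt_of_le_of_ne (hr j).1 (hr0 j).symm
  have hlt : r k < π := (hr k).2
  obtain ⟨A, B, haffine⟩ := exists_arcCost_add_coe_affine w hb hμ (p := -r j) (q := π - r k)
    (fun i => by linarith [hj i]) (fun i => by linarith [hk i])
  have hμA : arcCost y w μ = A := by simpa using haffine 0 ⟨by linarith, by linarith⟩
  rcases le_total B 0 with hB | hB
  · refine ⟨b k + π, (mem_dataAndAntipodes (hb k)).2, ?_⟩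
    have hend : μ + ((π - r k : ℝ) : Angle) = b k + π := by rw [hμ k, coe_sub]; abel
    rw [← hend, haffine _ ⟨by linarith, le_rfl⟩, hμA]
    nlinarith
  · refine ⟨b j, (mem_dataAndAntipodes (hb j)).1, ?_⟩
    have hend : μ + ((-r j : ℝ) : Angle) = b j := by rw [hμ j, coe_neg]; abel
    rw [← hend, haffine _ ⟨le_rfl, by linarith⟩, hμA]
    nlinarith

end

theorem weighted_median_circle_attained_at_data_or_antipodal
    (m : ℕ) (hm : 1 ≤ m) (y : Fin m → Real.Angle) (w : Fin m → ℝ) :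
    ∃ μ' : Real.Angle,
      (μ' ∈ Set.range y ∪ Set.range (fun i => y i + (Real.pi : Real.Angle))) ∧
      ∀ μ : Real.Angle,
        (∑ j, w j * arcDist μ' (y j)) ≤ ∑ j, w j * arcDist μ (y j) := by
  have : Nonempty (Fin m) := ⟨⟨0, hm⟩⟩
  have hfinite : (dataAndAntipodes y).Finite := (Set.finite_range _).union (Set.finite_range _)
  obtain ⟨μ', hμ', hmin⟩ :=
    (dataAndAntipodes y).exists_min_image (arcCost y w) hfinite ⟨y ⟨0, hm⟩, Or.inl ⟨_, rfl⟩⟩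
  refine ⟨μ', hμ', fun μ => ?_⟩
  obtain ⟨c, hc, hcμ⟩ := exists_mem_dataAndAntipodes_arcCost_le w μ
  exact (hmin c hc).trans hcμ
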